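/- Let T satisfy T = 1 + zT^3, T' = T^3/(1 - 3zT^2), and let Δ₃ be as in the linear system above. Then the generating function δ(z) = 3T + 3zT²Δ₃ + 3z²T²T' for first-level intradistances equals \sum_R (3 + \sum_{S ∈ S(R)} (Δ₃(S) + |S|)) z^{|R|}, where the outer sum is over all RANS R (interpreting the combinatorial quantities via the ternary tree model). -/

import Mathlib

/-- Rooted plane ternary trees, modeling RANS. -/
inductive Tern : Type
  | leaf : Tern
  | node : Tern → Tern → Tern → Tern
deriving DecidableEq

/-- Order of a RANS. -/
def Tern.size : Tern → ℕ
  | .leaf => 0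
  | .node a b c => 1 + a.size + b.size + c.size

/-- Sum of the distance labels of internal vertices when the outermost
vertices carry labels `a b c` (the center gets `1 + min` of them). -/
def Tern.labelSum : Tern → ℕ → ℕ → ℕ → ℕ
  | .leaf, _, _, _ => 0
  | .node s₁ s₂ s₃, a, b, c =>
      let m := 1 + min a (min b c)
      m + s₁.labelSum m b c + s₂.labelSum a m c + s₃.labelSum a b m

/-- `Δ₃(R)`: sum over internal vertices of the distance to the set of the
three outermost vertices. -/
def Tern.d3 (t : Tern) : ℕ := t.labelSum 0 0 0

/-- The finite set of all ternary trees of size `n`. -/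
def treesOf : ℕ → Finset Tern
  | 0 => {Tern.leaf}
  | n + 1 =>
      (Finset.Nat.antidiagonalTuple 3 n).biUnion fun k =>
        ((treesOf (min (k 0) n) ×ˢ treesOf (min (k 1) n) ×ˢ treesOf (min (k 2) n)).image
          fun p => Tern.node p.1 p.2.1 p.2.2)
  termination_by n => n
  decreasing_by all_goals simp [Nat.lt_succ_iff]

open PowerSeries

/-!
Splitting a RANS at its center into its three sub-RANS shows that the generating function
`G_f = ∑_R f(R) z^{|R|}` of a functional with `f (node a b c) = k + p a + q b + r c` is
`f(leaf) + z (k A³ + A² (G_p + G_q + G_r))`, where `A = G_1` counts RANS. For `f = 1` this is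
`A = 1 + z A³`, an equation with only one solution, so `T = A`. For `f = |·|` it is
`S = z A³ + 3 z A² S`, so `S = z T'`. For the first-level intradistance (`k = 3`,
`p = q = r = Δ₃ + |·|`) it gives `3 + z (3 A³ + 3 A² (Δ₃ + S)) = 3T + 3zT²Δ₃ + 3z²T²T'`.
-/

open Finset

theorem mem_treesOf {n : ℕ} {t : Tern} : t ∈ treesOf n ↔ t.size = n := by
  induction n using Nat.strong_induction_on generalizing t with
  | _ n ih =>
  cases n with
  | zero => cases t <;> simp [treesOf, Tern.size]
  | succ n =>
    have ih' : ∀ k ≤ n, ∀ s : Tern, s ∈ treesOf (min k n) ↔ s.size = k := fun k hk s => by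
      rw [min_eq_left hk]
      exact ih k (by omega)
    cases t with
    | leaf => simp [treesOf, Tern.size]
    | node a b c =>
      rw [treesOf]
      simp only [mem_biUnion, mem_image, mem_product, Prod.exists, Tern.node.injEq,
        Nat.mem_antidiagonalTuple, Fin.sum_univ_three, Tern.size]
      constructor
      · rintro ⟨k, hk, a', b', c', ⟨ha, hb, hc⟩, rfl, rfl, rfl⟩
        rw [ih' _ (by omega)] at ha hb hc
        omega
      · intro h
        refine ⟨![a.size, b.size, c.size], ?_, a, b, c, ?_⟩
        · simp only [Matrix.cons_val_zero, Matrix.cons_val_one, Matrix.cons_val]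
          omega
        · simp [ih' _ (by omega : a.size ≤ n), ih' _ (by omega : b.size ≤ n),
            ih' _ (by omega : c.size ≤ n)]

theorem sum_treesOf_succ {M : Type*} [AddCommMonoid M] (n : ℕ) (f : Tern → M) :
    ∑ t ∈ treesOf (n + 1), f t =
      ∑ k ∈ Nat.antidiagonalTuple 3 n,
        ∑ a ∈ treesOf (k 0), ∑ b ∈ treesOf (k 1), ∑ c ∈ treesOf (k 2), f (.node a b c) := by
  have sum_eq {k : Fin 3 → ℕ} (hk : k ∈ Nat.antidiagonalTuple 3 n) : k 0 + k 1 + k 2 = n := by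
    rwa [Nat.mem_antidiagonalTuple, Fin.sum_univ_three] at hk
  rw [treesOf, sum_biUnion]
  · refine sum_congr rfl fun k hk => ?_
    have := sum_eq hk
    rw [min_eq_left (by omega : k 0 ≤ n), min_eq_left (by omega : k 1 ≤ n),
      min_eq_left (by omega : k 2 ≤ n),
      sum_image fun _ _ _ _ h => by simpa [Prod.ext_iff] using h]
    simp only [sum_product]
  · intro k hk k' hk' hne
    simp only [Function.onFun, disjoint_left, mem_image, mem_product, mem_treesOf, Prod.exists]
    rintro _ ⟨a, b, c, ⟨ha, hb, hc⟩, rfl⟩ ⟨a', b', c', ⟨ha', hb', hc'⟩, h⟩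
    cases h
    have := sum_eq hk
    have := sum_eq hk'
    refine hne (funext fun i => ?_)
    fin_cases i <;> simp only [Fin.zero_eta, Fin.mk_one, Fin.reduceFinMk] <;> omega

theorem Finset.Nat.sum_antidiagonalTuple_three {M : Type*} [AddCommMonoid M] (n : ℕ)
    (f : (Fin 3 → ℕ) → M) :
    ∑ k ∈ Nat.antidiagonalTuple 3 n, f k =
      ∑ p ∈ antidiagonal n, ∑ q ∈ antidiagonal p.2, f ![p.1, q.1, q.2] := by
  rw [sum_sigma']
  refine sum_nbij' (fun k => ⟨(k 0, k 1 + k 2), (k 1, k 2)⟩) (fun p => ![p.1.1, p.2.1, p.2.2])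
    ?_ ?_ ?_ ?_ ?_
  all_goals simp only [mem_sigma, HasAntidiagonal.mem_antidiagonal, Nat.mem_antidiagonalTuple,
    Fin.sum_univ_three, Sigma.forall, Prod.forall, and_true]
  · intro k hk
    omega
  · intro i j p q hp
    simp only [Matrix.cons_val_zero, Matrix.cons_val_one, Matrix.cons_val]
    omega
  · intro k _
    ext i
    fin_cases i <;> rfl
  · intro i j p q hp
    simp only [Matrix.cons_val_zero, Matrix.cons_val_one, Matrix.cons_val, Sigma.mk.injEq,
      Prod.mk.injEq, true_and, heq_eq_eq, and_true] at hp ⊢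
    omega
  · intro k _
    congr 1
    ext i
    fin_cases i <;> rfl

theorem PowerSeries.coeff_succ_X_mul_mul_mul {R : Type*} [CommSemiring R] (n : ℕ)
    (φ ψ χ : PowerSeries R) :
    coeff (n + 1) (X * φ * ψ * χ) =
      ∑ k ∈ Nat.antidiagonalTuple 3 n, coeff (k 0) φ * coeff (k 1) ψ * coeff (k 2) χ := by
  rw [mul_assoc, mul_assoc, coeff_succ_X_mul, coeff_mul, Nat.sum_antidiagonalTuple_three]
  refine sum_congr rfl fun p _ => ?_
  rw [coeff_mul, mul_sum]
  simp [mul_assoc]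

theorem Finset.sum_mul_sum_mul_sum {ι κ μ R : Type*} [CommSemiring R] (s : Finset ι)
    (t : Finset κ) (u : Finset μ) (f : ι → R) (g : κ → R) (h : μ → R) :
    (∑ i ∈ s, f i) * (∑ j ∈ t, g j) * (∑ l ∈ u, h l) =
      ∑ i ∈ s, ∑ j ∈ t, ∑ l ∈ u, f i * g j * h l := by
  rw [sum_mul_sum, sum_mul]
  simp_rw [sum_mul_sum]

section GenFun

variable {R : Type*} [CommSemiring R]

noncomputable def genFun (f : Tern → R) : PowerSeries R :=
  mk fun n => ∑ t ∈ treesOf n, f t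

@[simp]
theorem coeff_genFun (f : Tern → R) (n : ℕ) : coeff n (genFun f) = ∑ t ∈ treesOf n, f t :=
  coeff_mk _ _

theorem genFun_add (f g : Tern → R) : genFun (fun t => f t + g t) = genFun f + genFun g := by
  ext n
  simp [sum_add_distrib]

@[simp]
theorem genFun_zero : genFun (0 : Tern → R) = 0 := by
  ext n
  simp

theorem genFun_eq_of_node_eq {f p q r : Tern → R} {k : R}
    (hf : ∀ a b c, f (.node a b c) = k + p a + q b + r c) :
    genFun f = C (f .leaf) + X * (C k * genFun 1 ^ 3 + genFun p * genFun 1 * genFun 1 +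
      genFun 1 * genFun q * genFun 1 + genFun 1 * genFun 1 * genFun r) := by
  ext n
  cases n with
  | zero => simp [treesOf]
  | succ n =>
    have : X * (C k * genFun 1 ^ 3 + genFun p * genFun 1 * genFun 1 +
        genFun 1 * genFun q * genFun 1 + genFun 1 * genFun 1 * genFun r) =
        C k * (X * genFun 1 * genFun 1 * genFun 1) + X * genFun p * genFun 1 * genFun 1 +
        X * genFun 1 * genFun q * genFun 1 + X * genFun 1 * genFun 1 * genFun r := by
      ring
    rw [this]
    simp only [map_add, coeff_C_mul, coeff_succ_X_mul_mul_mul, coeff_genFun, coeff_C,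
      sum_treesOf_succ, Nat.succ_ne_zero, if_false, zero_add, sum_mul_sum_mul_sum, Pi.one_apply]
    simp only [mul_sum, ← sum_add_distrib, hf, mul_one, one_mul]

theorem genFun_one : genFun (1 : Tern → R) = 1 + X * genFun 1 ^ 3 :=
  (genFun_eq_of_node_eq (p := 0) (q := 0) (r := 0) (k := 1) fun _ _ _ => by simp).trans
    (by simp)

theorem genFun_size : genFun (fun t => (t.size : R)) =
    X * genFun 1 ^ 3 + 3 * X * genFun 1 ^ 2 * genFun (fun t => (t.size : R)) := by
  refine (genFun_eq_of_node_eq (k := 1) fun a b c => by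
    simp only [Tern.size]
    push_cast
    rfl).trans ?_
  simp only [Tern.size, Nat.cast_zero, map_zero, map_one]
  ring

end GenFun

theorem PowerSeries.eq_of_eq_one_add_X_mul_pow_three {R : Type*} [CommRing R]
    {T U : PowerSeries R} (hT : T = 1 + X * T ^ 3) (hU : U = 1 + X * U ^ 3) : T = U := by
  have hunit : IsUnit (1 - X * (T ^ 2 + T * U + U ^ 2)) := by
    simp [isUnit_iff_constantCoeff]
  rw [← sub_eq_zero, ← hunit.mul_left_eq_zero]
  linear_combination hT - hU

theorem genFun_size_eq_mul_inv {k : Type*} [Field k] :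
    genFun (fun t => (t.size : k)) = X * genFun 1 ^ 3 * (1 - 3 * X * genFun 1 ^ 2)⁻¹ := by
  rw [eq_mul_inv_iff_mul_eq (by simp)]
  linear_combination genFun_size (R := k)

/-- The generating function `δ(z) = 3T + 3zT²Δ₃ + 3z²T²T'` for first-level
intradistances equals `∑_R (3 + ∑_{S ∈ 𝒮(R)} (Δ₃(S) + |S|)) z^{|R|}`, the sum
being over all RANS `R` (via the ternary tree model). -/
theorem intradistance_first_level (T Δ₃ : PowerSeries ℚ)
    (hT : T = 1 + X * T ^ 3)
    (hΔ₃ : ∀ n, PowerSeries.coeff n Δ₃ = ∑ t ∈ treesOf n, (t.d3 : ℚ)) :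
    ∀ n, PowerSeries.coeff n
        (3 * T + 3 * X * T ^ 2 * Δ₃ +
          3 * X ^ 2 * T ^ 2 * (T ^ 3 * (1 - 3 * X * T ^ 2)⁻¹)) =
      ∑ t ∈ treesOf n,
        ((3 : ℚ) + match t with
          | .leaf => 0
          | .node a b c => ((a.d3 + a.size) + (b.d3 + b.size) + (c.d3 + c.size) : ℚ)) := by
  have hTA : T = genFun 1 := eq_of_eq_one_add_X_mul_pow_three hT genFun_one
  have hΔ : Δ₃ = genFun (fun t => (t.d3 : ℚ)) := ext fun n => by rw [hΔ₃, coeff_genFun]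
  intro n
  rw [← coeff_genFun]
  congr 1
  rw [genFun_eq_of_node_eq (k := 3) (p := fun t => (t.d3 : ℚ) + t.size)
      (q := fun t => (t.d3 : ℚ) + t.size) (r := fun t => (t.d3 : ℚ) + t.size)
      fun a b c => by dsimp only; ring,
    genFun_add, hTA, hΔ]
  dsimp only
  rw [add_zero, map_ofNat]
  linear_combination 3 * genFun_one (R := ℚ) -
    3 * X * genFun 1 ^ 2 * genFun_size_eq_mul_inv (k := ℚ)
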